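/- arXiv:2007.04261 — 5 statements merged into one kernel-verified Lean document; each statement's English description precedes it below -/
import Mathlib

section
/- Let d, c, n be natural numbers with 1 ≤ c ≤ d, n ≥ 1 and d dividing n. Then there exists a finite set V with |V| = n and a hereditary family 𝓕 of subsets of V with d·(|𝓕| − 1) = n·(2^d − c) such that for every x ∈ V one has |𝓕_x| < |𝓕| − (2^{d−1} − c). In particular, m(n, 2^{d−1} − c) ≤ n(2^d − c)/d. -/
/-- A family of finite sets is hereditary if it is closed under taking subsets. -/
def Hereditary {α : Type*} [DecidableEq α] (𝓕 : Finset (Finset α)) : Prop :=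
  ∀ F ∈ 𝓕, ∀ F' ⊆ F, F' ∈ 𝓕

/-- The trace of a family `𝓕` at a vertex `x`: the family `{F \ {x} : F ∈ 𝓕}`. -/
def traceAt {α : Type*} [DecidableEq α] (𝓕 : Finset (Finset α)) (x : α) :
    Finset (Finset α) :=
  𝓕.image fun F => F.erase x

/-!
Take `n / d` copies of the first `2 ^ d - c + 1` subsets of a `d`-set in colex order (those of
binary value at most `2 ^ d - c`), placed on disjoint blocks and glued at `∅`. Deleting elements
lowers the binary value, so the family is hereditary. In a hereditary family the trace
at `x` merges each set containing `x` with the set without it, so `|𝓕_x| = |𝓕| - deg x`. A point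
`r` of a block lies in `2 ^ (d - 1)` subsets of the block, and only `c - 1` subsets are missing
from the colex segment, so `deg x ≥ 2 ^ (d - 1) - c + 1`.
-/

open Finset

theorem card_traceAt_add_card_filter_mem {α : Type*} [DecidableEq α] {𝓕 : Finset (Finset α)}
    (h𝓕 : Hereditary 𝓕) (x : α) : #(traceAt 𝓕 x) + #{F ∈ 𝓕 | x ∈ F} = #𝓕 := by
  have htrace : traceAt 𝓕 x = {F ∈ 𝓕 | x ∉ F} := by
    ext F
    simp only [traceAt, mem_image, mem_filter]
    constructor
    · rintro ⟨F₀, hF₀, rfl⟩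
      exact ⟨h𝓕 F₀ hF₀ _ (erase_subset _ _), notMem_erase _ _⟩
    · rintro ⟨hF, hxF⟩
      exact ⟨F, hF, erase_eq_of_notMem hxF⟩
  rw [htrace, add_comm, card_filter_add_card_filter_not]

theorem Finset.card_filter_mem_powerset {α : Type*} [DecidableEq α] {s : Finset α} {a : α}
    (ha : a ∈ s) : #{t ∈ s.powerset | a ∈ t} = 2 ^ (#s - 1) := by
  have himage : {t ∈ s.powerset | a ∈ t} = (s.erase a).powerset.image (insert a) := by
    ext t
    simp only [mem_filter, mem_powerset, mem_image]
    constructor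
    · rintro ⟨hts, hat⟩
      exact ⟨t.erase a, erase_subset_erase a hts, insert_erase hat⟩
    · rintro ⟨u, hus, rfl⟩
      exact ⟨insert_subset ha (hus.trans (erase_subset a s)), mem_insert_self a u⟩
  rw [himage, card_image_of_injOn, card_powerset, card_erase_of_mem ha]
  refine insert_erase_invOn.2.injOn.mono fun u hu => ?_
  exact notMem_mono (mem_powerset.1 hu) (notMem_erase a s)

/-- The first `N` finsets of `ℕ` in colexicographic order: those whose binary value
`∑ i ∈ A, 2 ^ i` is below `N`. -/
def colexInitial (N : ℕ) : Finset (Finset ℕ) :=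
  (range N).map equivBitIndices.toEmbedding

theorem mem_colexInitial {N : ℕ} {A : Finset ℕ} : A ∈ colexInitial N ↔ ∑ i ∈ A, 2 ^ i < N := by
  simp [colexInitial]

theorem card_colexInitial (N : ℕ) : #(colexInitial N) = N := by
  rw [colexInitial, card_map, card_range]

theorem hereditary_colexInitial (N : ℕ) : Hereditary (colexInitial N) := fun _ hA _ hBA =>
  mem_colexInitial.2 <| (sum_le_sum_of_subset hBA).trans_lt (mem_colexInitial.1 hA)

theorem colexInitial_two_pow (d : ℕ) : colexInitial (2 ^ d) = (range d).powerset := by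
  ext A
  rw [mem_colexInitial, mem_powerset]
  refine ⟨fun hA i hi => mem_range.2 ?_, fun hA => Nat.geomSum_lt le_rfl fun i hi => ?_⟩
  · exact (Nat.pow_lt_pow_iff_right one_lt_two).1 ((single_le_sum (by simp) hi).trans_lt hA)
  · exact mem_range.1 (hA hi)

theorem colexInitial_mono {M N : ℕ} (h : M ≤ N) : colexInitial M ⊆ colexInitial N :=
  fun _ hA => mem_colexInitial.2 ((mem_colexInitial.1 hA).trans_le h)

theorem colexInitial_subset_powerset {d N : ℕ} (h : N ≤ 2 ^ d) :
    colexInitial N ⊆ (range d).powerset :=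
  colexInitial_two_pow d ▸ colexInitial_mono h

/-- Of the `2 ^ (d - 1)` subsets of `range d` containing `r`, at most the `2 ^ d - N` ones
missing from `colexInitial N` are lost. -/
theorem two_pow_pred_le_card_filter_mem_colexInitial {d N r : ℕ} (hr : r < d) (hN : N ≤ 2 ^ d) :
    2 ^ (d - 1) ≤ #{A ∈ colexInitial N | r ∈ A} + (2 ^ d - N) := by
  have hcover : {A ∈ (range d).powerset | r ∈ A} ⊆
      {A ∈ colexInitial N | r ∈ A} ∪ ((range d).powerset \ colexInitial N) := by
    intro A hA
    rw [mem_filter] at hA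
    by_cases hAN : A ∈ colexInitial N
    · exact mem_union_left _ (mem_filter.2 ⟨hAN, hA.2⟩)
    · exact mem_union_right _ (mem_sdiff.2 ⟨hA.1, hAN⟩)
  have hcompl : #((range d).powerset \ colexInitial N) = 2 ^ d - N := by
    rw [card_sdiff_of_subset (colexInitial_subset_powerset hN), card_powerset, card_range,
      card_colexInitial]
  calc 2 ^ (d - 1) = #{A ∈ (range d).powerset | r ∈ A} := by
        rw [card_filter_mem_powerset (mem_range.2 hr), card_range]
    _ ≤ _ := (card_le_card hcover).trans (card_union_le _ _)
    _ = _ := by rw [hcompl]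

/-- `k` copies of `𝓐` placed on the consecutive blocks `[d * i, d * i + d)`, glued at `∅`. -/
def shiftedCopies (d k : ℕ) (𝓐 : Finset (Finset ℕ)) : Finset (Finset ℕ) :=
  insert ∅ ((range k).biUnion fun i =>
    (𝓐.erase ∅).map (mapEmbedding (addRightEmbedding (d * i))).toEmbedding)

section shiftedCopies

variable {d k : ℕ} {𝓐 : Finset (Finset ℕ)}

theorem mem_shiftedCopies {F : Finset ℕ} : F ∈ shiftedCopies d k 𝓐 ↔
    F = ∅ ∨ ∃ i < k, ∃ A ∈ 𝓐, A.map (addRightEmbedding (d * i)) = F := by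
  simp only [shiftedCopies, mem_insert, mem_biUnion, mem_range, mem_map, mem_erase,
    RelEmbedding.coe_toEmbedding, mapEmbedding_apply]
  constructor
  · rintro (rfl | ⟨i, hi, A, ⟨-, hA⟩, rfl⟩)
    exacts [Or.inl rfl, Or.inr ⟨i, hi, A, hA, rfl⟩]
  · rintro (rfl | ⟨i, hi, A, hA, rfl⟩)
    · exact Or.inl rfl
    rcases eq_or_ne A ∅ with rfl | hA₀
    · exact Or.inl (map_empty _)
    · exact Or.inr ⟨i, hi, A, ⟨hA₀, hA⟩, rfl⟩

theorem hereditary_shiftedCopies (h𝓐 : Hereditary 𝓐) : Hereditary (shiftedCopies d k 𝓐) := by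
  intro F hF F' hF'
  rw [mem_shiftedCopies] at hF ⊢
  rcases hF with rfl | ⟨i, hi, A, hA, rfl⟩
  · exact Or.inl (subset_empty.1 hF')
  obtain ⟨A', hA'A, rfl⟩ := subset_map_iff.1 hF'
  exact Or.inr ⟨i, hi, A', h𝓐 A hA A' hA'A, rfl⟩

theorem shiftedCopies_subset_powerset (h𝓐 : 𝓐 ⊆ (range d).powerset) :
    shiftedCopies d k 𝓐 ⊆ (range (d * k)).powerset := by
  intro F hF
  rw [mem_powerset]
  rcases mem_shiftedCopies.1 hF with rfl | ⟨i, hi, A, hA, rfl⟩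
  · exact empty_subset _
  intro x hx
  obtain ⟨a, ha, rfl⟩ := mem_map.1 hx
  have had : a < d := mem_range.1 (mem_powerset.1 (h𝓐 hA) ha)
  rw [mem_range, addRightEmbedding_apply]
  calc a + d * i < d * (i + 1) := by rw [mul_add_one]; omega
    _ ≤ d * k := Nat.mul_le_mul_left d hi

theorem card_shiftedCopies (h𝓐 : 𝓐 ⊆ (range d).powerset) (h𝓐₀ : ∅ ∈ 𝓐) :
    #(shiftedCopies d k 𝓐) = k * (#𝓐 - 1) + 1 := by
  have hblocks : (range k : Set ℕ).PairwiseDisjoint fun i =>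
      (𝓐.erase ∅).map (mapEmbedding (addRightEmbedding (d * i))).toEmbedding := by
    intro i _ j _ hij
    rw [Function.onFun, disjoint_left]
    intro F hFi hFj
    simp only [mem_map, mem_erase, RelEmbedding.coe_toEmbedding, mapEmbedding_apply] at hFi hFj
    obtain ⟨A, ⟨hA₀, hA⟩, rfl⟩ := hFi
    obtain ⟨A', ⟨-, hA'⟩, hA'A⟩ := hFj
    obtain ⟨a, ha⟩ := nonempty_iff_ne_empty.2 hA₀
    obtain ⟨a', ha', hblock⟩ := mem_map.1 (hA'A ▸ mem_map_of_mem (addRightEmbedding (d * i)) ha)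
    rw [addRightEmbedding_apply, addRightEmbedding_apply] at hblock
    have hlt {B b} (hB : B ∈ 𝓐) (hb : b ∈ B) : b < d := mem_range.1 (mem_powerset.1 (h𝓐 hB) hb)
    have hdiv {b l} (hb : b < d) : (b + d * l) / d = l := by
      rw [Nat.add_mul_div_left _ _ (by omega), Nat.div_eq_of_lt hb, zero_add]
    exact hij <| calc
      i = (a + d * i) / d := (hdiv (hlt hA ha)).symm
      _ = j := by rw [← hblock, hdiv (hlt hA' ha')]
  rw [shiftedCopies, card_insert_of_notMem, card_biUnion hblocks]
  · simp only [card_map, card_erase_of_mem h𝓐₀, sum_const, card_range, smul_eq_mul]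
  · simp

theorem card_filter_mem_le_card_filter_mem_shiftedCopies {r i : ℕ} (hi : i < k) :
    #{A ∈ 𝓐 | r ∈ A} ≤ #{F ∈ shiftedCopies d k 𝓐 | r + d * i ∈ F} := by
  refine card_le_card_of_injOn (fun A => A.map (addRightEmbedding (d * i))) (fun A hA => ?_)
    (map_injective _).injOn
  rw [mem_coe, mem_filter] at hA ⊢
  exact ⟨mem_shiftedCopies.2 (Or.inr ⟨i, hi, A, hA.1, rfl⟩), mem_map_of_mem _ hA.2⟩

end shiftedCopies

theorem trace_upper_construction_general (d c n : ℕ)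
    (hc : 1 ≤ c) (hcd : c ≤ d) (hdvd : d ∣ n) :
    ∃ V : Finset ℕ, V.card = n ∧
      ∃ 𝓕 : Finset (Finset ℕ), 𝓕 ⊆ V.powerset ∧ Hereditary 𝓕 ∧
        (d : ℤ) * ((𝓕.card : ℤ) - 1) = (n : ℤ) * (2 ^ d - c) ∧
        ∀ x ∈ V, ((traceAt 𝓕 x).card : ℤ) < (𝓕.card : ℤ) - (2 ^ (d - 1) - c) := by
  obtain ⟨k, rfl⟩ := hdvd
  have hc₂ : c ≤ 2 ^ d := hcd.trans d.lt_two_pow_self.le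
  set N := 2 ^ d - c + 1
  have hN : N ≤ 2 ^ d := by omega
  have h𝓐 := colexInitial_subset_powerset hN
  have hher : Hereditary (shiftedCopies d k (colexInitial N)) :=
    hereditary_shiftedCopies (hereditary_colexInitial N)
  refine ⟨range (d * k), card_range _, _, shiftedCopies_subset_powerset h𝓐, hher, ?_, ?_⟩
  · rw [card_shiftedCopies h𝓐 (mem_colexInitial.2 (by simp [N])), card_colexInitial,
      Nat.add_sub_cancel]
    push_cast [Nat.cast_sub hc₂]
    ring
  · intro x hx
    have hx' : x < d * k := mem_range.1 hx
    have hd : 0 < d := Nat.pos_of_ne_zero fun h => by simp [h] at hx'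
    have hdeg := card_filter_mem_le_card_filter_mem_shiftedCopies (d := d)
      (𝓐 := colexInitial N) (r := x % d) (Nat.div_lt_of_lt_mul hx')
    rw [Nat.mod_add_div] at hdeg
    have hcolex := two_pow_pred_le_card_filter_mem_colexInitial (Nat.mod_lt x hd) hN
    have htrace := card_traceAt_add_card_filter_mem hher x
    rw [show 2 ^ d - N = c - 1 by omega] at hcolex
    rw [← Nat.cast_ofNat, ← Nat.cast_pow]
    omega

/-- Upper-bound construction: for `1 ≤ c ≤ d`, `n ≥ 1` and `d ∣ n` there is a hereditary
family `𝓕` of subsets of an `n`-set `V` with `d·(|𝓕| − 1) = n·(2^d − c)` in which every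
vertex `x` satisfies `|𝓕_x| < |𝓕| − (2^{d−1} − c)`. -/
theorem trace_upper_construction (d c n : ℕ)
    (hc : 1 ≤ c) (hcd : c ≤ d) (hn : 1 ≤ n) (hdvd : d ∣ n) :
    ∃ V : Finset ℕ, V.card = n ∧
      ∃ 𝓕 : Finset (Finset ℕ), 𝓕 ⊆ V.powerset ∧ Hereditary 𝓕 ∧
        (d : ℤ) * ((𝓕.card : ℤ) - 1) = (n : ℤ) * (2 ^ d - c) ∧
        ∀ x ∈ V, ((traceAt 𝓕 x).card : ℤ) < (𝓕.card : ℤ) - (2 ^ (d - 1) - c) :=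
  trace_upper_construction_general d c n hc hcd hdvd
end

section
/- Let d, n be natural numbers with d ≥ 1 and n ≥ 1. Let V be a finite set with |V| = n and let 𝓕 be a family of subsets of V satisfying d·|𝓕| ≤ n·(2^d − 1). Then there exists a vertex x ∈ V such that |𝓕_x| ≥ |𝓕| − (2^{d−1} − 1). -/
open Finset

section

variable {α : Type*} [DecidableEq α] {𝒜 : Finset (Finset α)} {s : Finset α} {a : α}

namespace Finset

theorem sum_memberSubfamily {M : Type*} [AddCommMonoid M] (f : Finset α → M) :
    ∑ s ∈ 𝒜.memberSubfamily a, f (insert a s) = ∑ s ∈ 𝒜 with a ∈ s, f s := by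
  rw [← image_insert_memberSubfamily, sum_image]
  intro s hs t ht hst
  rw [← erase_insert (mem_memberSubfamily.1 hs).2, hst, erase_insert (mem_memberSubfamily.1 ht).2]

theorem sum_pow_card_eq_mul_sum_memberSubfamily_add {R : Type*} [CommSemiring R] (x : R) (a : α)
    (𝒜 : Finset (Finset α)) :
    ∑ s ∈ 𝒜, x ^ #s =
      x * ∑ s ∈ 𝒜.memberSubfamily a, x ^ #s + ∑ s ∈ 𝒜.nonMemberSubfamily a, x ^ #s := by
  rw [← sum_filter_add_sum_filter_not 𝒜 (a ∈ ·), ← sum_memberSubfamily, mul_sum]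
  congr 1
  refine sum_congr rfl fun s hs => ?_
  rw [card_insert_of_notMem (mem_memberSubfamily.1 hs).2, pow_succ']

theorem card_erase_empty_eq_sum_sum_memberSubfamily {V : Finset α} (h𝒜 : 𝒜 ⊆ V.powerset) :
    (#(𝒜.erase ∅) : ℝ) = ∑ y ∈ V, ∑ s ∈ 𝒜.memberSubfamily y, (#s + 1 : ℝ)⁻¹ := by
  -- the empty set contributes `#∅ * (#∅)⁻¹ = 0`
  calc (#(𝒜.erase ∅) : ℝ) = ∑ s ∈ 𝒜.erase ∅, (#s : ℝ) * (#s : ℝ)⁻¹ := by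
        rw [card_eq_sum_ones, Nat.cast_sum]
        refine sum_congr rfl fun s hs => ?_
        have : (#s : ℝ) ≠ 0 := by simpa using (mem_erase.1 hs).1
        rw [Nat.cast_one, mul_inv_cancel₀ this]
    _ = ∑ s ∈ 𝒜, ∑ y ∈ V with y ∈ s, (#s : ℝ)⁻¹ := by
        rw [sum_erase _ (by simp)]
        refine sum_congr rfl fun s hs => ?_
        rw [filter_mem_eq_inter, inter_eq_right.2 (mem_powerset.1 (h𝒜 hs)), sum_const,
          nsmul_eq_mul]
    _ = ∑ y ∈ V, ∑ s ∈ 𝒜 with y ∈ s, (#s : ℝ)⁻¹ :=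
        sum_comm' fun s y => by simp only [mem_filter]; tauto
    _ = _ := by
        refine sum_congr rfl fun y _ => ?_
        rw [← sum_memberSubfamily]
        refine sum_congr rfl fun s hs => ?_
        rw [card_insert_of_notMem (mem_memberSubfamily.1 hs).2, Nat.cast_succ]

theorem isLowerSet_of_forall_erase_mem (h : ∀ s ∈ 𝒜, ∀ a, s.erase a ∈ 𝒜) :
    IsLowerSet (𝒜 : Set (Finset α)) := by
  intro s t hts hs
  induction s using strongInduction with
  | _ s ih =>
    obtain rfl | hts := hts.eq_or_ssubset
    · exact hs
    obtain ⟨a, has, hat⟩ := exists_of_ssubset hts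
    exact ih _ (erase_ssubset has) (subset_erase.2 ⟨hts.subset, hat⟩) (h s hs a)

end Finset

namespace Down

theorem compression_eq_image (a : α) (𝒜 : Finset (Finset α)) :
    compression a 𝒜 = 𝒜.image fun s => if s.erase a ∈ 𝒜 then s else s.erase a := by
  ext s
  simp only [mem_compression, mem_image]
  constructor
  · rintro (⟨hs, hsa⟩ | ⟨hs, hins⟩)
    · exact ⟨s, hs, if_pos hsa⟩
    · have ha : a ∉ s := fun ha => hs (by rwa [insert_eq_of_mem ha] at hins)
      exact ⟨insert a s, hins, by rw [erase_insert ha, if_neg hs]⟩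
  · rintro ⟨t, ht, rfl⟩
    split_ifs with hta
    · exact .inl ⟨ht, hta⟩
    · have ha : a ∈ t := by_contra fun ha => hta (by rwa [erase_eq_of_notMem ha])
      exact .inr ⟨hta, by rwa [insert_erase ha]⟩

theorem compression_subset_powerset {V : Finset α} (h : 𝒜 ⊆ V.powerset) :
    compression a 𝒜 ⊆ V.powerset := by
  rw [compression_eq_image, image_subset_iff]
  intro t ht
  refine mem_powerset.2 (subset_trans ?_ (mem_powerset.1 (h ht)))
  split_ifs
  exacts [subset_rfl, erase_subset a t]

theorem sum_card_compression_lt (hs : s ∈ 𝒜) (hsa : s.erase a ∉ 𝒜) :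
    ∑ t ∈ compression a 𝒜, #t < ∑ t ∈ 𝒜, #t := by
  have ha : a ∈ s := by_contra fun ha => hsa (by rwa [erase_eq_of_notMem ha])
  rw [compression_eq_image]
  refine (sum_image_le_of_nonneg fun _ _ => Nat.zero_le _).trans_lt (sum_lt_sum ?_ ⟨s, hs, ?_⟩)
  · intro t _
    split_ifs
    exacts [le_rfl, card_erase_le]
  · rw [if_neg hsa]
    exact card_erase_lt_of_mem ha

theorem traceAt_compression_self_subset (a : α) (𝒜 : Finset (Finset α)) :
    traceAt (compression a 𝒜) a ⊆ traceAt 𝒜 a := by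
  rw [traceAt, image_subset_iff]
  intro t ht
  rcases mem_compression.1 ht with ⟨ht, -⟩ | ⟨-, hins⟩
  · exact mem_image_of_mem _ ht
  · exact mem_image.2 ⟨insert a t, hins, erase_insert_eq_erase t a⟩

theorem traceAt_compression_subset_compression_traceAt {y : α} (hya : y ≠ a) :
    traceAt (compression a 𝒜) y ⊆ compression a (traceAt 𝒜 y) := by
  rw [traceAt, image_subset_iff]
  intro t ht
  rw [mem_compression]
  rcases mem_compression.1 ht with ⟨ht, hta⟩ | ⟨hnt, hins⟩
  · refine .inl ⟨mem_image_of_mem _ ht, ?_⟩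
    rw [erase_right_comm]
    exact mem_image_of_mem _ hta
  · have ha : a ∉ t := fun ha => hnt (by rwa [insert_eq_of_mem ha] at hins)
    by_cases hty : t.erase y ∈ traceAt 𝒜 y
    · exact .inl ⟨hty, by rwa [erase_eq_of_notMem (fun h => ha (mem_of_mem_erase h))]⟩
    · refine .inr ⟨hty, ?_⟩
      rw [← erase_insert_of_ne hya.symm]
      exact mem_image_of_mem _ hins

theorem card_traceAt_compression_le (a y : α) (𝒜 : Finset (Finset α)) :
    #(traceAt (compression a 𝒜) y) ≤ #(traceAt 𝒜 y) := by
  obtain rfl | hya := eq_or_ne y a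
  · exact card_le_card (traceAt_compression_self_subset y 𝒜)
  · exact (card_le_card (traceAt_compression_subset_compression_traceAt hya)).trans
      (card_compression a _).le

end Down

theorem IsLowerSet.traceAt_eq_nonMemberSubfamily (h : IsLowerSet (𝒜 : Set (Finset α))) (a : α) :
    traceAt 𝒜 a = 𝒜.nonMemberSubfamily a := by
  rw [traceAt, ← memberSubfamily_union_nonMemberSubfamily,
    union_eq_right.2 h.memberSubfamily_subset_nonMemberSubfamily]

theorem IsLowerSet.card_traceAt_add_card_memberSubfamily (h : IsLowerSet (𝒜 : Set (Finset α)))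
    (a : α) : #(traceAt 𝒜 a) + #(𝒜.memberSubfamily a) = #𝒜 := by
  rw [h.traceAt_eq_nonMemberSubfamily, add_comm, card_memberSubfamily_add_card_nonMemberSubfamily]

theorem exists_isLowerSet_card_eq_card_traceAt_le {V : Finset α} (h𝒜 : 𝒜 ⊆ V.powerset) :
    ∃ 𝒟 ⊆ V.powerset, IsLowerSet (𝒟 : Set (Finset α)) ∧ #𝒟 = #𝒜 ∧
      ∀ y ∈ V, #(traceAt 𝒟 y) ≤ #(traceAt 𝒜 y) := by
  set 𝒞 := {𝒟 ∈ V.powerset.powerset | #𝒟 = #𝒜 ∧ ∀ y ∈ V, #(traceAt 𝒟 y) ≤ #(traceAt 𝒜 y)}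
  obtain ⟨𝒟, h𝒟, hmin⟩ := exists_min_image 𝒞 (fun 𝒟 => ∑ s ∈ 𝒟, #s)
    ⟨𝒜, mem_filter.2 ⟨mem_powerset.2 h𝒜, rfl, fun _ _ => le_rfl⟩⟩
  obtain ⟨h𝒟V, hcard, htrace⟩ := mem_filter.1 h𝒟
  refine ⟨𝒟, mem_powerset.1 h𝒟V, isLowerSet_of_forall_erase_mem fun s hs a => ?_, hcard, htrace⟩
  by_contra hsa
  have hcompression : Down.compression a 𝒟 ∈ 𝒞 :=
    mem_filter.2 ⟨mem_powerset.2 (Down.compression_subset_powerset (mem_powerset.1 h𝒟V)),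
      (Down.card_compression a 𝒟).trans hcard,
      fun y hy => (Down.card_traceAt_compression_le a y 𝒟).trans (htrace y hy)⟩
  exact (hmin _ hcompression).not_gt (Down.sum_card_compression_lt hs hsa)

theorem add_rpow_le_rpow_add_mul_rpow {t a b : ℝ} (ht₀ : 0 ≤ t) (ht₁ : t ≤ 1) (hb : 0 < b)
    (hba : b ≤ a) : (a + b) ^ t ≤ a ^ t + (2 ^ t - 1) * b ^ t := by
  -- `(b, a + b)` majorizes `(2 * b, a)`, so concavity gives `(a + b)^t + b^t ≤ a^t + (2 * b)^t`
  have ha : 0 < a := hb.trans_le hba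
  have hconc := (Real.concaveOn_rpow ht₀ ht₁).2
  have hb' : b ∈ Set.Ici (0 : ℝ) := Set.mem_Ici.2 hb.le
  have hab' : a + b ∈ Set.Ici (0 : ℝ) := Set.mem_Ici.2 (by positivity)
  have hw₁ : 0 ≤ (a - b) / a := div_nonneg (sub_nonneg.2 hba) ha.le
  have hw₂ : 0 ≤ b / a := by positivity
  have hsum : (a - b) / a + b / a = 1 := by field_simp; ring
  have h2b := hconc hb' hab' hw₁ hw₂ hsum
  have ha' := hconc hb' hab' hw₂ hw₁ (by rw [add_comm, hsum])
  simp only [smul_eq_mul] at h2b ha'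
  rw [show (a - b) / a * b + b / a * (a + b) = 2 * b by field_simp; ring,
    Real.mul_rpow zero_le_two hb.le] at h2b
  rw [show b / a * b + (a - b) / a * (a + b) = a by field_simp; ring] at ha'
  linear_combination h2b + ha' - ((a + b) ^ t + b ^ t) * hsum

theorem IsLowerSet.card_rpow_le_sum_pow {t : ℝ} (ht₀ : 0 ≤ t) (ht₁ : t ≤ 1)
    (h𝒜 : IsLowerSet (𝒜 : Set (Finset α))) (hne : 𝒜.Nonempty) :
    (#𝒜 : ℝ) ^ t ≤ ∑ s ∈ 𝒜, (2 ^ t - 1 : ℝ) ^ #s := by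
  induction 𝒜 using memberFamily_induction_on with
  | empty => exact absurd hne not_nonempty_empty
  | singleton_empty => simp
  | @subfamily a 𝒜 ih₀ ih₁ =>
    have hcard := card_memberSubfamily_add_card_nonMemberSubfamily a 𝒜
    rw [sum_pow_card_eq_mul_sum_memberSubfamily_add _ a]
    obtain h₁ | h₁ := (𝒜.memberSubfamily a).eq_empty_or_nonempty
    · rw [h₁, card_empty, zero_add] at hcard
      rw [h₁, sum_empty, mul_zero, zero_add, ← hcard]
      exact ih₀ h𝒜.nonMemberSubfamily (card_pos.1 (hcard ▸ card_pos.2 hne))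
    · have hsub := h𝒜.memberSubfamily_subset_nonMemberSubfamily (a := a)
      have hx : (0 : ℝ) ≤ 2 ^ t - 1 := sub_nonneg.2 (Real.one_le_rpow one_le_two ht₀)
      calc (#𝒜 : ℝ) ^ t
          = ((#(𝒜.nonMemberSubfamily a) : ℝ) + #(𝒜.memberSubfamily a)) ^ t := by
            rw [← hcard, add_comm, Nat.cast_add]
        _ ≤ (#(𝒜.nonMemberSubfamily a) : ℝ) ^ t +
              (2 ^ t - 1) * (#(𝒜.memberSubfamily a) : ℝ) ^ t :=
            add_rpow_le_rpow_add_mul_rpow ht₀ ht₁ (by exact_mod_cast h₁.card_pos)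
              (by exact_mod_cast card_le_card hsub)
        _ ≤ _ := by
            rw [add_comm]
            gcongr
            exacts [ih₁ h𝒜.memberSubfamily h₁, ih₀ h𝒜.nonMemberSubfamily (h₁.mono hsub)]

theorem IsLowerSet.div_le_sum_inv_card_add_one {k : ℕ} (h𝒜 : IsLowerSet (𝒜 : Set (Finset α)))
    (hk : 2 ^ k ≤ #𝒜) :
    (2 ^ (k + 1) - 1) / (k + 1) ≤ ∑ s ∈ 𝒜, (#s + 1 : ℝ)⁻¹ := by
  have hne : 𝒜.Nonempty := card_pos.1 ((Nat.two_pow_pos k).trans_le hk)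
  have hpointwise : ∀ x ∈ Set.Icc (0 : ℝ) 1, (1 + x) ^ k ≤ ∑ s ∈ 𝒜, x ^ #s := by
    rintro x ⟨hx₀, hx₁⟩
    set t := Real.logb 2 (1 + x)
    have h2t : (2 : ℝ) ^ t = 1 + x := Real.rpow_logb zero_lt_two (by norm_num) (by linarith)
    have ht₀ : 0 ≤ t := Real.logb_nonneg one_lt_two (by linarith)
    have ht₁ : t ≤ 1 := by
      rw [Real.logb_le_iff_le_rpow one_lt_two (by linarith), Real.rpow_one]
      linarith
    calc (1 + x) ^ k = ((2 : ℝ) ^ k) ^ t := by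
          rw [← h2t, ← Real.rpow_mul_natCast zero_le_two, ← Real.rpow_natCast_mul zero_le_two,
            mul_comm]
      _ ≤ (#𝒜 : ℝ) ^ t := Real.rpow_le_rpow (by positivity) (by exact_mod_cast hk) ht₀
      _ ≤ ∑ s ∈ 𝒜, (2 ^ t - 1 : ℝ) ^ #s := h𝒜.card_rpow_le_sum_pow ht₀ ht₁ hne
      _ = ∑ s ∈ 𝒜, x ^ #s := by rw [h2t, add_sub_cancel_left]
  calc (2 ^ (k + 1) - 1) / (k + 1) = ∫ x in (0 : ℝ)..1, (1 + x) ^ k := by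
        rw [intervalIntegral.integral_comp_add_left (· ^ k), integral_pow]
        norm_num
    _ ≤ ∫ x in (0 : ℝ)..1, ∑ s ∈ 𝒜, x ^ #s :=
        intervalIntegral.integral_mono_on zero_le_one
          (Continuous.intervalIntegrable (by fun_prop) _ _)
          (Continuous.intervalIntegrable (by fun_prop) _ _) hpointwise
    _ = ∑ s ∈ 𝒜, (#s + 1 : ℝ)⁻¹ := by
        rw [intervalIntegral.integral_finsetSum fun _ _ =>
          Continuous.intervalIntegrable (by fun_prop) _ _]
        simp [integral_pow]

theorem IsLowerSet.card_mul_le_card_erase_empty {V : Finset α} {k : ℕ}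
    (h𝒜 : IsLowerSet (𝒜 : Set (Finset α))) (hV : 𝒜 ⊆ V.powerset)
    (hdeg : ∀ y ∈ V, 2 ^ k ≤ #(𝒜.memberSubfamily y)) :
    #V * ((2 ^ (k + 1) - 1) / (k + 1) : ℝ) ≤ #(𝒜.erase ∅) := by
  rw [card_erase_empty_eq_sum_sum_memberSubfamily hV, ← nsmul_eq_mul, ← sum_const]
  exact sum_le_sum fun y hy => h𝒜.memberSubfamily.div_le_sum_inv_card_add_one (hdeg y hy)

end

/-- Lower-bound (arrowing) direction: if `d ≥ 1`, `n ≥ 1` and a family `𝓕` of subsets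
of an `n`-set `V` has `d·|𝓕| ≤ n·(2^d − 1)`, then some vertex `x ∈ V` satisfies
`|𝓕_x| ≥ |𝓕| − (2^{d−1} − 1)`. -/
theorem trace_lower_c1 {α : Type*} [DecidableEq α] (d n : ℕ)
    (hd : 1 ≤ d) (hn : 1 ≤ n)
    (V : Finset α) (hV : V.card = n)
    (𝓕 : Finset (Finset α)) (h𝓕 : 𝓕 ⊆ V.powerset)
    (hcount : (d : ℤ) * 𝓕.card ≤ (n : ℤ) * (2 ^ d - 1)) :
    ∃ x ∈ V, (𝓕.card : ℤ) - (2 ^ (d - 1) - 1) ≤ ((traceAt 𝓕 x).card : ℤ) := by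
  obtain ⟨k, rfl⟩ : ∃ k, d = k + 1 := ⟨d - 1, by omega⟩
  by_contra! hsmall
  obtain ⟨𝒟, h𝒟V, h𝒟, hcard, htrace⟩ := exists_isLowerSet_card_eq_card_traceAt_le h𝓕
  have hdeg : ∀ y ∈ V, 2 ^ k ≤ #(𝒟.memberSubfamily y) := fun y hy => by
    have hsplit := h𝒟.card_traceAt_add_card_memberSubfamily y
    have hle := htrace y hy
    have hlt := hsmall y hy
    rw [Nat.add_sub_cancel, ← hcard, ← hsplit] at hlt
    push_cast at hlt
    zify at hle ⊢
    linarith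
  obtain ⟨y, hy⟩ : V.Nonempty := card_pos.1 (hV ▸ hn)
  have hempty : ∅ ∈ 𝒟 := by
    obtain ⟨s, hs⟩ := card_pos.1 ((Nat.two_pow_pos k).trans_le (hdeg y hy))
    exact h𝒟 (empty_subset _) (mem_memberSubfamily.1 hs).1
  have hcard' : (#(𝒟.erase ∅) : ℝ) + 1 = #𝓕 := by
    exact_mod_cast (card_erase_add_one hempty).trans hcard
  have hbound := h𝒟.card_mul_le_card_erase_empty h𝒟V hdeg
  rw [hV, mul_div_assoc', div_le_iff₀ (by positivity)] at hbound
  have hcount' : ((k + 1 : ℕ) : ℝ) * #𝓕 ≤ n * (2 ^ (k + 1) - 1) := by exact_mod_cast hcount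
  push_cast at hcount'
  rw [← hcard'] at hcount'
  linarith
end

section
/- Let f : ℕ → ℝ be a monotone non-increasing function, let V be a finite set, and let 𝓕 be a hereditary family of subsets of V with |𝓕| = m. Then Σ_{F ∈ 𝓕} f(|F|) ≥ Σ_{R ∈ R(m)} f(|R|). -/
/-- `colexInit m` is the family of the first `m` finite subsets of `ℕ` in colexicographic
order; a finite set `A ⊆ ℕ` has colexicographic rank `∑ i ∈ A, 2 ^ i`. -/
def colexInit (m : ℕ) : Finset (Finset ℕ) :=
  (Finset.range m).powerset.filter fun A => ∑ i ∈ A, 2 ^ i < m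

/-!
Under Mathlib's `Finset.equivBitIndices`, which lists `Finset ℕ` in colexicographic order, `R(m)`
corresponds to the numbers `r < m` and `|R|` to the popcount of `r`. For antitone `f`, Abel
summation reduces the theorem to comparing the counts of small sets: for every `K`, at least
`N(m, K)` members of `𝓕` have fewer than `K` elements, where `N(n, K)` is the number of `r < n` of
popcount `< K`. Splitting a hereditary family at an element `x` into the `a` members avoiding `x`
and the `b ≤ a` links of `x`, both hereditary, this follows by induction from
`N(a + b, K) ≤ N(a, K) + N(b, K - 1)` for `b ≤ a`. That inequality is proved by halving `a` and
`b`, using `N(n, K) = N(⌈n / 2⌉, K) + N(⌊n / 2⌋, K - 1)`: the even numbers `2i < n` have the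
popcount of `i`, the odd ones `2i + 1 < n` one more.
-/

open Finset

namespace Nat

def popcount (n : ℕ) : ℕ := n.bitIndices.length

@[simp] lemma popcount_two_mul (n : ℕ) : popcount (2 * n) = popcount n := by
  simp [popcount]

@[simp] lemma popcount_two_mul_add_one (n : ℕ) : popcount (2 * n + 1) = popcount n + 1 := by
  simp [popcount]

lemma card_equivBitIndices (n : ℕ) : #(equivBitIndices n) = popcount n :=
  List.toFinset_card_of_nodup bitIndices_nodup

lemma count_popcount_lt_two_mul (K n : ℕ) :
    count (popcount · < K) (2 * n) = count (popcount · < K) n + count (popcount · < K - 1) n := by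
  induction n with
  | zero => simp
  | succ n ih =>
    rw [show 2 * (n + 1) = 2 * n + 1 + 1 by ring, count_succ, count_succ, ih, count_succ,
      count_succ, popcount_two_mul, popcount_two_mul_add_one]
    split_ifs <;> omega

lemma count_popcount_lt_eq_half_add_half (K n : ℕ) :
    count (popcount · < K) n =
      count (popcount · < K) ((n + 1) / 2) + count (popcount · < K - 1) (n / 2) := by
  obtain ⟨n, rfl | rfl⟩ := n.even_or_odd'
  · rw [count_popcount_lt_two_mul]
    congr 2 <;> omega
  · rw [count_succ, count_popcount_lt_two_mul, popcount_two_mul,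
      show (2 * n + 1 + 1) / 2 = n + 1 by omega, show (2 * n + 1) / 2 = n by omega, count_succ]
    ring

theorem count_popcount_lt_add_le {a b : ℕ} (hba : b ≤ a) (K : ℕ) :
    count (popcount · < K) (a + b) ≤ count (popcount · < K) a + count (popcount · < K - 1) b := by
  induction hn : a + b using Nat.strong_induction_on generalizing a b K with
  | _ n ih =>
  subst hn
  obtain rfl | hbpos := b.eq_zero_or_pos
  · simp
  obtain rfl | hba := hba.eq_or_lt
  · rw [← two_mul, count_popcount_lt_two_mul]
  have hsum := count_popcount_lt_eq_half_add_half K (a + b)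
  have ha := count_popcount_lt_eq_half_add_half K a
  have hb := count_popcount_lt_eq_half_add_half (K - 1) b
  by_cases hodd : a % 2 = 1 ∧ b % 2 = 1
  · -- Here `⌈(a + b) / 2⌉ = ⌈a / 2⌉ + ⌊b / 2⌋`: the halves of `b` pair up crosswise, at the cost
    -- of one popcount test at `⌊b / 2⌋`.
    have e1 : (a + b + 1) / 2 = (a + 1) / 2 + b / 2 := by omega
    have e2 : (a + b) / 2 = a / 2 + (b / 2 + 1) := by omega
    rw [e1, e2] at hsum
    rw [show (b + 1) / 2 = b / 2 + 1 by omega] at hb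
    have ih₁ := ih _ (by omega) (a := (a + 1) / 2) (b := b / 2) (by omega) K rfl
    have ih₂ := ih _ (by omega) (a := a / 2) (b := b / 2 + 1) (by omega) (K - 1) rfl
    have hstep : count (popcount · < K - 1 - 1) (b / 2 + 1) + count (popcount · < K - 1) (b / 2)
        ≤ count (popcount · < K - 1) (b / 2 + 1) + count (popcount · < K - 1 - 1) (b / 2) := by
      simp only [count_succ]
      split_ifs <;> omega
    omega
  · have e1 : (a + b + 1) / 2 = (a + 1) / 2 + (b + 1) / 2 := by omega
    have e2 : (a + b) / 2 = a / 2 + b / 2 := by omega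
    rw [e1, e2] at hsum
    have ih₁ := ih _ (by omega) (a := (a + 1) / 2) (b := (b + 1) / 2) (by omega) K rfl
    have ih₂ := ih _ (by omega) (a := a / 2) (b := b / 2) (by omega) (K - 1) rfl
    omega

end Nat

lemma colexInit_eq_map (m : ℕ) : colexInit m = (range m).map equivBitIndices.toEmbedding := by
  ext A
  simp only [colexInit, mem_filter, mem_powerset, mem_map_equiv, mem_range,
    equivBitIndices_symm_apply]
  refine ⟨And.right, fun hA => ⟨fun i hi => ?_, hA⟩⟩
  exact mem_range.2 <| (i.lt_two_pow_self.trans_le (single_le_sum (by simp) hi)).trans hA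

lemma Hereditary.isLowerSet {α : Type*} [DecidableEq α] {𝓕 : Finset (Finset α)}
    (h : Hereditary 𝓕) : IsLowerSet (𝓕 : Set (Finset α)) :=
  fun _ _ hts hs => h _ hs _ hts

lemma Finset.card_filter_card_lt_eq_add {α : Type*} [DecidableEq α] (a : α)
    (𝒜 : Finset (Finset α)) (K : ℕ) :
    #{s ∈ 𝒜 | #s < K} =
      #{s ∈ 𝒜.nonMemberSubfamily a | #s < K} + #{s ∈ 𝒜.memberSubfamily a | #s < K - 1} := by
  rw [← card_memberSubfamily_add_card_nonMemberSubfamily a, add_comm]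
  congr 2
  · ext s
    simp only [mem_nonMemberSubfamily, mem_filter]
    tauto
  · ext s
    simp only [mem_memberSubfamily, mem_filter]
    constructor
    · rintro ⟨⟨hs, hK⟩, ha⟩
      rw [card_insert_of_notMem ha] at hK
      exact ⟨⟨hs, ha⟩, by omega⟩
    · rintro ⟨⟨hs, ha⟩, hK⟩
      rw [card_insert_of_notMem ha]
      exact ⟨⟨hs, by omega⟩, ha⟩

theorem IsLowerSet.count_popcount_lt_card_le {α : Type*} [DecidableEq α] {𝒜 : Finset (Finset α)}
    (h𝒜 : IsLowerSet (𝒜 : Set (Finset α))) (K : ℕ) :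
    Nat.count (Nat.popcount · < K) #𝒜 ≤ #{s ∈ 𝒜 | #s < K} := by
  induction 𝒜 using memberFamily_induction_on generalizing K with
  | empty => simp
  | singleton_empty =>
    by_cases hK : 0 < K <;> simp [Nat.count_succ, Nat.popcount, filter_singleton, hK]
  | subfamily a ih₀ ih₁ =>
    rw [card_filter_card_lt_eq_add a, ← card_memberSubfamily_add_card_nonMemberSubfamily a,
      add_comm]
    calc _ ≤ _ := Nat.count_popcount_lt_add_le
          (card_le_card h𝒜.memberSubfamily_subset_nonMemberSubfamily) K
      _ ≤ _ := add_le_add (ih₀ h𝒜.nonMemberSubfamily K) (ih₁ h𝒜.memberSubfamily (K - 1))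

section LayerCake

variable {ι κ R : Type*} [AddCommGroup R]

lemma sum_comp_eq_card_smul_add_sum (f : ℕ → R) {s : Finset ι} {g : ι → ℕ} {B : ℕ}
    (hB : ∀ i ∈ s, g i ≤ B) :
    ∑ i ∈ s, f (g i) = #s • f B + ∑ j ∈ range B, #{i ∈ s | g i ≤ j} • (f j - f (j + 1)) := by
  have htele : ∀ i ∈ s,
      f (g i) = f B + ∑ j ∈ range B, if g i ≤ j then f j - f (j + 1) else 0 := by
    intro i hi
    rw [← sum_filter, show {j ∈ range B | g i ≤ j} = Ico (g i) B by ext; simp; omega]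
    have := sum_Ico_sub (-f) (hB i hi)
    simp only [Pi.neg_apply, neg_sub_neg] at this
    rw [this, add_sub_cancel]
  rw [sum_congr rfl htele, sum_add_distrib, sum_const, sum_comm]
  congr 1
  refine sum_congr rfl fun j _ => ?_
  rw [← sum_filter, sum_const]

theorem Antitone.sum_comp_le_sum_comp_of_card_filter_lt_le [PartialOrder R]
    [IsOrderedAddMonoid R] {f : ℕ → R} (hf : Antitone f) {s : Finset ι} {t : Finset κ}
    {g : ι → ℕ} {h : κ → ℕ} (hst : #s = #t)
    (hcount : ∀ K, #{i ∈ s | g i < K} ≤ #{j ∈ t | h j < K}) :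
    ∑ i ∈ s, f (g i) ≤ ∑ j ∈ t, f (h j) := by
  set B := s.sup g ⊔ t.sup h
  rw [sum_comp_eq_card_smul_add_sum f fun i hi => le_sup_of_le_left (le_sup hi),
    sum_comp_eq_card_smul_add_sum f fun j hj => le_sup_of_le_right (le_sup hj), hst]
  gcongr with j
  · exact sub_nonneg.2 (hf j.le_succ)
  · simpa only [Nat.lt_succ_iff] using hcount (j + 1)

end LayerCake

theorem katona_generalised_kruskal_katona_general {α : Type*} [DecidableEq α]
    (f : ℕ → ℝ) (hf : Antitone f) (m : ℕ)
    (𝓕 : Finset (Finset α)) (hher : Hereditary 𝓕)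
    (hcard : 𝓕.card = m) :
    ∑ R ∈ colexInit m, f R.card ≤ ∑ F ∈ 𝓕, f F.card := by
  rw [colexInit_eq_map, sum_map]
  refine hf.sum_comp_le_sum_comp_of_card_filter_lt_le (by simp [hcard]) fun K => ?_
  simp only [Equiv.coe_toEmbedding, Nat.card_equivBitIndices, ← Nat.count_eq_card_filter_range,
    ← hcard]
  exact hher.isLowerSet.count_popcount_lt_card_le K

/-- Katona's generalisation of the Kruskal–Katona theorem: for a monotone non-increasing
`f : ℕ → ℝ` and a hereditary family `𝓕` with `|𝓕| = m`, we have
`∑_{F ∈ 𝓕} f(|F|) ≥ ∑_{R ∈ R(m)} f(|R|)`. -/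
theorem katona_generalised_kruskal_katona {α : Type*} [DecidableEq α]
    (f : ℕ → ℝ) (hf : Antitone f) (V : Finset α) (m : ℕ)
    (𝓕 : Finset (Finset α)) (h𝓕 : 𝓕 ⊆ V.powerset) (hher : Hereditary 𝓕)
    (hcard : 𝓕.card = m) :
    ∑ R ∈ colexInit m, f R.card ≤ ∑ F ∈ 𝓕, f F.card :=
  katona_generalised_kruskal_katona_general f hf m 𝓕 hher hcard
end

section
/- Let d ≥ 4 and c ≤ 2^d be natural numbers, let V be a finite set, and let 𝓗 be a hereditary family of subsets of V with |𝓗| ≥ 2^d − c. Then Σ_{H ∈ 𝓗} 1/(|H| + 1) ≥ W(2^d − c). -/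
/-- `W m = ∑_{R ∈ R(m)} 1/(|R| + 1)`. -/
noncomputable def W (m : ℕ) : ℝ :=
  ∑ R ∈ colexInit m, (1 : ℝ) / (R.card + 1)

/-!
Integrating `x ↦ x ^ |H|` over `[0, 1]` writes both sides as integrals, so it suffices that for
each `0 ≤ x ≤ 1` the colex family `R(m)` minimises `∑ x ^ |H|` among hereditary families
of size at least `m`. Splitting a hereditary family at an element `a` into the sets avoiding `a`
and the link of `a` (a hereditary subfamily of the former) reduces this to
`f (p + q) ≤ f p + x * f q` for `q ≤ p`, where `f = colexWeight x`. That inequality is proved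
by induction on the binary expansion, using `f (2 ^ k + n) = f (2 ^ k) + x * f n` for `n ≤ 2 ^ k`.
-/

open Finset

lemma sum_two_pow_lt_two_pow_iff {A : Finset ℕ} {k : ℕ} :
    ∑ i ∈ A, 2 ^ i < 2 ^ k ↔ ∀ i ∈ A, i < k :=
  ⟨fun h i hi => (Nat.pow_lt_pow_iff_right (by norm_num)).1 <|
      (single_le_sum (fun _ _ => Nat.zero_le _) hi).trans_lt h,
    Nat.geomSum_lt le_rfl⟩

lemma mem_colexInit {m : ℕ} {A : Finset ℕ} : A ∈ colexInit m ↔ ∑ i ∈ A, 2 ^ i < m := by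
  simp only [colexInit, mem_filter, mem_powerset, and_iff_right_iff_imp]
  exact fun h i hi => mem_range.2 <| (lt_geomSum_of_mem le_rfl hi).trans h

lemma colexInit_mono : Monotone colexInit := fun _ _ h _ hA =>
  mem_colexInit.2 <| (mem_colexInit.1 hA).trans_le h

@[simp] lemma colexInit_zero : colexInit 0 = ∅ := by
  ext A; simp [mem_colexInit]

@[simp] lemma colexInit_one : colexInit 1 = {∅} := by
  ext A; simp [mem_colexInit, sum_eq_zero_iff, eq_empty_iff_forall_notMem]

lemma nonMemberSubfamily_colexInit_two_pow_add {k n : ℕ} (hn : n ≤ 2 ^ k) :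
    (colexInit (2 ^ k + n)).nonMemberSubfamily k = colexInit (2 ^ k) := by
  ext A
  rw [mem_nonMemberSubfamily, mem_colexInit, mem_colexInit]
  refine ⟨fun ⟨hA, hkA⟩ => sum_two_pow_lt_two_pow_iff.2 fun i hi => ?_,
    fun hA => ⟨by omega, fun hk => (sum_two_pow_lt_two_pow_iff.1 hA k hk).false⟩⟩
  have hA' : ∑ i ∈ A, 2 ^ i < 2 ^ (k + 1) := by rw [pow_succ]; omega
  have := sum_two_pow_lt_two_pow_iff.1 hA' i hi
  exact lt_of_le_of_ne (Nat.lt_succ_iff.1 this) (ne_of_mem_of_not_mem hi hkA)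

lemma memberSubfamily_colexInit_two_pow_add {k n : ℕ} (hn : n ≤ 2 ^ k) :
    (colexInit (2 ^ k + n)).memberSubfamily k = colexInit n := by
  ext A
  rw [mem_memberSubfamily, mem_colexInit, mem_colexInit]
  constructor
  · rintro ⟨hA, hkA⟩
    rw [sum_insert hkA] at hA
    omega
  · intro hA
    have hkA : k ∉ A := fun hk => (sum_two_pow_lt_two_pow_iff.1 (hA.trans_le hn) k hk).false
    rw [sum_insert hkA]
    exact ⟨by omega, hkA⟩

lemma Finset.sum_pow_card_eq_nonMemberSubfamily_add {α R : Type*} [DecidableEq α]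
    [CommSemiring R] (x : R) (a : α) (𝒜 : Finset (Finset α)) :
    ∑ s ∈ 𝒜, x ^ #s =
      ∑ s ∈ 𝒜.nonMemberSubfamily a, x ^ #s + x * ∑ s ∈ 𝒜.memberSubfamily a, x ^ #s := by
  rw [← sum_filter_not_add_sum_filter 𝒜 (a ∈ ·), ← image_insert_memberSubfamily,
    sum_image fun s hs t ht => (insert_erase_invOn.2.injOn (mem_memberSubfamily.1 hs).2
      (mem_memberSubfamily.1 ht).2 ·), mul_sum]
  congr 1
  refine sum_congr rfl fun s hs => ?_
  rw [card_insert_of_notMem (mem_memberSubfamily.1 hs).2, pow_succ']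

noncomputable def colexWeight (x : ℝ) (m : ℕ) : ℝ := ∑ R ∈ colexInit m, x ^ #R

@[simp] lemma colexWeight_zero (x : ℝ) : colexWeight x 0 = 0 := by simp [colexWeight]

@[simp] lemma colexWeight_one (x : ℝ) : colexWeight x 1 = 1 := by simp [colexWeight]

lemma colexWeight_nonneg {x : ℝ} (hx : 0 ≤ x) (m : ℕ) : 0 ≤ colexWeight x m :=
  sum_nonneg fun _ _ => pow_nonneg hx _

lemma colexWeight_mono {x : ℝ} (hx : 0 ≤ x) : Monotone (colexWeight x) := fun _ _ h =>
  sum_le_sum_of_subset_of_nonneg (colexInit_mono h) fun _ _ _ => pow_nonneg hx _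

lemma colexWeight_two_pow_add (x : ℝ) {k n : ℕ} (hn : n ≤ 2 ^ k) :
    colexWeight x (2 ^ k + n) = colexWeight x (2 ^ k) + x * colexWeight x n := by
  rw [colexWeight, sum_pow_card_eq_nonMemberSubfamily_add x k,
    nonMemberSubfamily_colexInit_two_pow_add hn, memberSubfamily_colexInit_two_pow_add hn,
    colexWeight, colexWeight]

lemma colexWeight_two_pow_succ (x : ℝ) (k : ℕ) :
    colexWeight x (2 ^ (k + 1)) = colexWeight x (2 ^ k) + x * colexWeight x (2 ^ k) := by
  rw [pow_succ, mul_two, colexWeight_two_pow_add x le_rfl]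

section colexWeight

variable {x : ℝ}

lemma colexWeight_two_pow_add_le_add (hx0 : 0 ≤ x) (hx1 : x ≤ 1) {j : ℕ}
    (hsub : ∀ s t, s + t < 2 ^ j → colexWeight x (s + t) ≤ colexWeight x s + colexWeight x t)
    {s t u : ℕ} (hs : s ≤ 2 ^ j) (ht : t ≤ 2 ^ j) (hu : s + t = 2 ^ j + u) :
    colexWeight x (2 ^ j) + colexWeight x u ≤ colexWeight x s + colexWeight x t := by
  induction j generalizing s t u with
  | zero =>
    rw [pow_zero] at *
    rcases (by omega : s = 1 ∨ t = 1) with rfl | rfl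
    · obtain rfl : u = t := by omega
      rfl
    · obtain rfl : u = s := by omega
      rw [add_comm]
  | succ j ih =>
    wlog hts : t ≤ s generalizing s t
    · rw [add_comm (colexWeight x s)]
      exact this ht hs (by omega) (by omega)
    have hpow : 2 ^ (j + 1) = 2 ^ j + 2 ^ j := by ring
    have hsub' : ∀ s t, s + t < 2 ^ j →
        colexWeight x (s + t) ≤ colexWeight x s + colexWeight x t :=
      fun s t hst => hsub s t (by omega)
    obtain ⟨s, rfl⟩ : ∃ s', s = 2 ^ j + s' := ⟨s - 2 ^ j, by omega⟩
    rw [colexWeight_two_pow_succ, colexWeight_two_pow_add x (by omega : s ≤ 2 ^ j)]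
    rcases le_or_gt (2 ^ j) t with htQ | htQ
    · obtain ⟨t, rfl⟩ : ∃ t', t = 2 ^ j + t' := ⟨t - 2 ^ j, by omega⟩
      rw [colexWeight_two_pow_add x (by omega : t ≤ 2 ^ j)]
      rcases le_or_gt (2 ^ j) u with huQ | huQ
      · obtain ⟨u, rfl⟩ : ∃ u', u = 2 ^ j + u' := ⟨u - 2 ^ j, by omega⟩
        rw [colexWeight_two_pow_add x (by omega : u ≤ 2 ^ j)]
        have := ih hsub' (u := u) (by omega : s ≤ 2 ^ j) (by omega : t ≤ 2 ^ j) (by omega)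
        nlinarith [mul_le_mul_of_nonneg_left this hx0]
      · have hst : s + t = u := by omega
        have h₁ := hsub' s t (by omega)
        have h₂ := colexWeight_mono hx0 huQ.le
        rw [hst] at h₁
        nlinarith [mul_le_mul_of_nonneg_left h₁ hx0,
          mul_nonneg (sub_nonneg.2 hx1) (sub_nonneg.2 h₂)]
    · have := ih hsub' (u := u) (by omega : s ≤ 2 ^ j) htQ.le (by omega)
      have hut := colexWeight_mono hx0 (by omega : u ≤ t)
      nlinarith [mul_le_mul_of_nonneg_left this hx0,
        mul_nonneg (sub_nonneg.2 hx1) (sub_nonneg.2 hut)]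

theorem colexWeight_add_le (hx0 : 0 ≤ x) (hx1 : x ≤ 1) {a b : ℕ} (hba : b ≤ a) :
    colexWeight x (a + b) ≤ colexWeight x a + x * colexWeight x b := by
  induction h : a + b using Nat.strong_induction_on generalizing a b with
  | _ N ih =>
    subst h
    have hsub : ∀ s t, s + t < a + b →
        colexWeight x (s + t) ≤ colexWeight x s + colexWeight x t := by
      intro s t hst
      wlog hts : t ≤ s generalizing s t
      · rw [add_comm s, add_comm (colexWeight x s)]
        exact this t s (by omega) (by omega)
      nlinarith [ih _ hst hts rfl, colexWeight_nonneg hx0 t]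
    rcases Nat.eq_zero_or_pos b with rfl | hb
    · simp
    have hk₁ : 2 ^ Nat.log 2 (a + b) ≤ a + b := Nat.pow_log_le_self 2 (by omega)
    have hk₂ : a + b < 2 ^ (Nat.log 2 (a + b) + 1) := Nat.lt_pow_succ_log_self (by norm_num) _
    generalize Nat.log 2 (a + b) = k at hk₁ hk₂
    rcases le_or_gt (2 ^ k) a with hka | hka
    · obtain ⟨a, rfl⟩ := Nat.exists_eq_add_of_le hka
      have hab := hsub a b (by have := Nat.one_le_two_pow (n := k); omega)
      rw [add_assoc, colexWeight_two_pow_add x (by rw [pow_succ] at hk₂; omega),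
        colexWeight_two_pow_add x (by omega)]
      nlinarith [mul_le_mul_of_nonneg_left hab hx0]
    -- otherwise the top digit `2 ^ k` of `a + b` is a carry, so `k ≥ 1` and `a ≥ 2 ^ (k - 1)`
    obtain ⟨j, rfl⟩ : ∃ j, k = j + 1 :=
      ⟨k - 1, by rcases k with _ | k <;> simp at hka ⊢; omega⟩
    have hpow : 2 ^ (j + 1) = 2 ^ j + 2 ^ j := by ring
    obtain ⟨a, rfl⟩ : ∃ a', a = 2 ^ j + a' := ⟨a - 2 ^ j, by omega⟩
    obtain ⟨u, hu⟩ : ∃ u, 2 ^ j + a + b = 2 ^ (j + 1) + u :=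
      ⟨2 ^ j + a + b - 2 ^ (j + 1), by omega⟩
    rw [hu, colexWeight_two_pow_add x (by omega : u ≤ 2 ^ (j + 1)), colexWeight_two_pow_succ,
      colexWeight_two_pow_add x (by omega : a ≤ 2 ^ j)]
    rcases le_or_gt b (2 ^ j) with hbQ | hbQ
    · have := colexWeight_two_pow_add_le_add hx0 hx1 (fun s t hst => hsub s t (by omega))
        (u := u) (by omega : a ≤ 2 ^ j) hbQ (by omega)
      nlinarith [mul_le_mul_of_nonneg_left this hx0]
    · obtain ⟨b, rfl⟩ : ∃ b', b = 2 ^ j + b' := ⟨b - 2 ^ j, by omega⟩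
      obtain rfl : u = a + b := by omega
      rw [colexWeight_two_pow_add x (by omega : b ≤ 2 ^ j)]
      have := ih (a + b) (by omega) (by omega : b ≤ a) rfl
      nlinarith [mul_le_mul_of_nonneg_left this hx0]

end colexWeight

theorem colexWeight_card_le_sum_pow_card {α : Type*} [DecidableEq α] {x : ℝ} (hx0 : 0 ≤ x)
    (hx1 : x ≤ 1) {𝒜 : Finset (Finset α)} (h𝒜 : IsLowerSet (𝒜 : Set (Finset α))) :
    colexWeight x #𝒜 ≤ ∑ s ∈ 𝒜, x ^ #s := by
  induction 𝒜 using memberFamily_induction_on with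
  | empty => simp
  | singleton_empty => simp
  | @subfamily a 𝒜 ih₀ ih₁ =>
    rw [← card_memberSubfamily_add_card_nonMemberSubfamily a, add_comm,
      sum_pow_card_eq_nonMemberSubfamily_add x a]
    calc _ ≤ colexWeight x #(𝒜.nonMemberSubfamily a) +
            x * colexWeight x #(𝒜.memberSubfamily a) :=
          colexWeight_add_le hx0 hx1 (card_le_card h𝒜.memberSubfamily_subset_nonMemberSubfamily)
      _ ≤ _ := add_le_add (ih₀ h𝒜.nonMemberSubfamily)
          (mul_le_mul_of_nonneg_left (ih₁ h𝒜.memberSubfamily) hx0)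

lemma sum_one_div_add_one_eq_integral {β : Type*} (s : Finset β) (f : β → ℕ) :
    ∑ b ∈ s, (1 : ℝ) / (f b + 1) = ∫ x in (0 : ℝ)..1, ∑ b ∈ s, x ^ f b := by
  rw [intervalIntegral.integral_finsetSum fun i _ => (continuous_pow (f i)).intervalIntegrable 0 1]
  refine sum_congr rfl fun b _ => ?_
  rw [integral_pow]
  norm_num

theorem weight_lemma_basic_general {α : Type*} [DecidableEq α] (d c : ℕ)
    (𝓗 : Finset (Finset α)) (hher : Hereditary 𝓗)
    (hcard : 2 ^ d - c ≤ 𝓗.card) :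
    W (2 ^ d - c) ≤ ∑ H ∈ 𝓗, (1 : ℝ) / (H.card + 1) := by
  rw [W, sum_one_div_add_one_eq_integral, sum_one_div_add_one_eq_integral]
  refine intervalIntegral.integral_mono_on zero_le_one
    ((continuous_finsetSum _ fun _ _ => continuous_pow _).intervalIntegrable 0 1)
    ((continuous_finsetSum _ fun _ _ => continuous_pow _).intervalIntegrable 0 1) ?_
  rintro x ⟨hx0, hx1⟩
  calc colexWeight x (2 ^ d - c) ≤ colexWeight x #𝓗 := colexWeight_mono hx0 hcard
    _ ≤ ∑ H ∈ 𝓗, x ^ #H := colexWeight_card_le_sum_pow_card hx0 hx1 hher.isLowerSet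

/-- Lemma 3.1(1): if `d ≥ 4`, `c ≤ 2^d` and `𝓗` is a hereditary family with
`|𝓗| ≥ 2^d − c`, then `∑_{H ∈ 𝓗} 1/(|H| + 1) ≥ W(2^d − c)`. -/
theorem weight_lemma_basic {α : Type*} [DecidableEq α] (d c : ℕ)
    (hd : 4 ≤ d) (hc : c ≤ 2 ^ d) (V : Finset α)
    (𝓗 : Finset (Finset α)) (h𝓗 : 𝓗 ⊆ V.powerset) (hher : Hereditary 𝓗)
    (hcard : 2 ^ d - c ≤ 𝓗.card) :
    W (2 ^ d - c) ≤ ∑ H ∈ 𝓗, (1 : ℝ) / (H.card + 1) :=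
  weight_lemma_basic_general d c 𝓗 hher hcard
end

section
/- Let d ≥ 5 be a natural number and let 𝓕 = {S ⊆ [d] : |S| ≤ d − 2}. Then |𝓕| = 2^d − d − 1, every vertex of [d] has degree 2^{d−1} − d in 𝓕, and for every x ∈ [d] one has |𝓕_x| < |𝓕| − (2^{d−1} − d − 1). In particular, m(d, 2^{d−1} − (d+1)) ≤ 2^d − (d+2). -/
open Finset

namespace Finset

variable {α : Type*} [DecidableEq α]

lemma card_powerset_filter_card_le_succ (s : Finset α) (k : ℕ) :
    #{S ∈ s.powerset | #S ≤ k + 1} = #{S ∈ s.powerset | #S ≤ k} + (#s).choose (k + 1) := by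
  have hsplit : {S ∈ s.powerset | #S ≤ k + 1} =
      {S ∈ s.powerset | #S ≤ k} ∪ s.powersetCard (k + 1) := by
    rw [powersetCard_eq_filter, ← filter_or]
    exact filter_congr fun S _ => by omega
  have hdisj : Disjoint {S ∈ s.powerset | #S ≤ k} (s.powersetCard (k + 1)) :=
    disjoint_left.2 fun S hS hS' => by
      rw [mem_filter] at hS
      rw [mem_powersetCard] at hS'
      omega
  rw [hsplit, card_union_of_disjoint hdisj, card_powersetCard]

omit [DecidableEq α] in
lemma powerset_filter_card_le_card (s : Finset α) :
    {S ∈ s.powerset | #S ≤ #s} = s.powerset :=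
  filter_true_of_mem fun _ hS => card_le_card (mem_powerset.1 hS)

lemma card_powerset_filter_card_le_card_sub_one {s : Finset α} (hs : s.Nonempty) :
    #{S ∈ s.powerset | #S ≤ #s - 1} = 2 ^ #s - 1 := by
  have h := card_powerset_filter_card_le_succ s (#s - 1)
  rw [Nat.sub_add_cancel hs.card_pos, powerset_filter_card_le_card, card_powerset,
    Nat.choose_self] at h
  omega

lemma card_powerset_filter_card_le_card_sub_two {s : Finset α} (hs : 2 ≤ #s) :
    #{S ∈ s.powerset | #S ≤ #s - 2} = 2 ^ #s - #s - 1 := by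
  obtain ⟨n, hn⟩ : ∃ n, #s = n + 2 := ⟨#s - 2, by omega⟩
  have h₁ := card_powerset_filter_card_le_succ s n
  have h₂ := card_powerset_filter_card_le_succ s (n + 1)
  rw [hn, Nat.choose_succ_self_right] at h₁
  rw [hn, Nat.choose_self, ← hn, powerset_filter_card_le_card, card_powerset] at h₂
  simp only [hn, Nat.add_sub_cancel] at h₁ h₂ ⊢
  omega

lemma filter_notMem_powerset_filter_card_le (s : Finset α) (k : ℕ) (x : α) :
    {S ∈ {S ∈ s.powerset | #S ≤ k} | x ∉ S} = {T ∈ (s.erase x).powerset | #T ≤ k} := by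
  ext T
  simp only [mem_filter, mem_powerset, subset_erase]
  tauto

end Finset

lemma traceAt_powerset_filter_card_le {α : Type*} [DecidableEq α] (s : Finset α) (k : ℕ)
    (x : α) :
    traceAt {S ∈ s.powerset | #S ≤ k} x = {T ∈ (s.erase x).powerset | #T ≤ k} := by
  ext T
  simp only [traceAt, mem_image, mem_filter, mem_powerset]
  constructor
  · rintro ⟨S, ⟨hS, hk⟩, rfl⟩
    exact ⟨erase_subset_erase x hS, card_erase_le.trans hk⟩
  · rintro ⟨hT, hk⟩
    obtain ⟨hTs, hxT⟩ := subset_erase.1 hT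
    exact ⟨T, ⟨hTs, hk⟩, erase_eq_of_notMem hxT⟩

/-- For `d ≥ 5`, the family `𝓕 = {S ⊆ [d] : |S| ≤ d − 2}` has `2^d − d − 1` edges, every
vertex of `[d]` has degree `2^{d−1} − d` in it, and every `x ∈ [d]` satisfies
`|𝓕_x| < |𝓕| − (2^{d−1} − d − 1)`. -/
theorem nonlocal_small_construction (d : ℕ) (hd : 5 ≤ d)
    (𝓕 : Finset (Finset ℕ))
    (h𝓕 : 𝓕 = (Finset.Icc 1 d).powerset.filter fun S => S.card ≤ d - 2) :
    𝓕.card = 2 ^ d - d - 1 ∧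
    (∀ x ∈ Finset.Icc 1 d, (𝓕.filter fun F => x ∈ F).card = 2 ^ (d - 1) - d) ∧
    (∀ x ∈ Finset.Icc 1 d,
      ((traceAt 𝓕 x).card : ℤ) < (𝓕.card : ℤ) - ((2 : ℤ) ^ (d - 1) - d - 1)) := by
  have hcard : #(Icc 1 d) = d := by simp
  have h𝓕card : #𝓕 = 2 ^ d - d - 1 := by
    have h := card_powerset_filter_card_le_card_sub_two (s := Icc 1 d) (by omega)
    rwa [hcard, ← h𝓕] at h
  have hcard_avoiding : ∀ x ∈ Icc 1 d,
      #{T ∈ ((Icc 1 d).erase x).powerset | #T ≤ d - 2} = 2 ^ (d - 1) - 1 := by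
    intro x hx
    have hcard' : #((Icc 1 d).erase x) = d - 1 := by rw [card_erase_of_mem hx, hcard]
    rw [show d - 2 = d - 1 - 1 by omega, ← hcard']
    exact card_powerset_filter_card_le_card_sub_one (card_pos.1 (by omega))
  have hpow : 2 ^ d = 2 * 2 ^ (d - 1) := by rw [← pow_succ']; congr 1; omega
  have hlt : d < 2 ^ d := Nat.lt_two_pow_self
  refine ⟨h𝓕card, fun x hx => ?_, fun x hx => ?_⟩
  · have h := card_filter_add_card_filter_not (s := 𝓕) (p := fun F => x ∈ F)
    rw [h𝓕card, h𝓕, filter_notMem_powerset_filter_card_le, hcard_avoiding x hx] at h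
    rw [h𝓕]
    omega
  · have hcast : (2 : ℤ) ^ (d - 1) = ((2 ^ (d - 1) : ℕ) : ℤ) := by push_cast; rfl
    rw [h𝓕card, hcast, h𝓕, traceAt_powerset_filter_card_le, hcard_avoiding x hx]
    omega
end
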